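/- arXiv:math/0406356 — 5 statements merged into one kernel-verified Lean document; each statement's English description precedes it below -/
import Mathlib

section
/- Let p be a prime integer and let λ ∈ ℤ[u,v,w,x,y,z] be any polynomial such that p·λ − ((ux)^p + (vy)^p + (wz)^p) lies in the ideal (ux+vy+wz). Then in R = ℤ[u,v,w,x,y,z]/(ux+vy+wz), for every integer k ≥ 0, the image of λ·(xyz)^k does not belong to the ideal (x^{p+k}, y^{p+k}, z^{p+k})R. -/
open MvPolynomial Finsupp

namespace Stmt2

noncomputable def Φ : MvPolynomial (Fin 6) ℤ →ₐ[ℤ] MvPolynomial (Fin 5) ℤ :=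
  aeval ![X 0 * X 3 * X 4, X 1 * X 2 * X 4, -(X 0 + X 1) * X 2 * X 3, X 2, X 3, X 4]

lemma Φ_X0 : Φ (X 0) = X 0 * X 3 * X 4 := by simp only [Φ, aeval_X]; rfl
lemma Φ_X1 : Φ (X 1) = X 1 * X 2 * X 4 := by simp only [Φ, aeval_X]; rfl
lemma Φ_X2 : Φ (X 2) = -(X 0 + X 1) * X 2 * X 3 := by simp only [Φ, aeval_X]; rfl
lemma Φ_X3 : Φ (X 3) = X 2 := by simp only [Φ, aeval_X]; rfl
lemma Φ_X4 : Φ (X 4) = X 3 := by simp only [Φ, aeval_X]; rfl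
lemma Φ_X5 : Φ (X 5) = X 4 := by simp only [Φ, aeval_X]; rfl

lemma Φ_s : Φ (X 0 * X 3 + X 1 * X 4 + X 2 * X 5) = 0 := by
  simp only [map_add, map_mul, Φ_X0, Φ_X1, Φ_X2, Φ_X3, Φ_X4, Φ_X5]; ring

lemma Φ_monomial (d : Fin 6 →₀ ℕ) (c : ℤ) :
    Φ (monomial d c) = C c * (X 0 * X 3 * X 4) ^ (d 0) * (X 1 * X 2 * X 4) ^ (d 1) *
      (-(X 0 + X 1) * X 2 * X 3) ^ (d 2) * X 2 ^ (d 3) * X 3 ^ (d 4) * X 4 ^ (d 5) := by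
  have hd : d = Finsupp.single 0 (d 0) + Finsupp.single 1 (d 1) + Finsupp.single 2 (d 2)
      + Finsupp.single 3 (d 3) + Finsupp.single 4 (d 4) + Finsupp.single 5 (d 5) := by
    ext i; fin_cases i <;> simp [Finsupp.single_apply]
  have : monomial d c = C c * (X 0:MvPolynomial (Fin 6) ℤ) ^ (d 0) * X 1 ^ (d 1) * X 2 ^ (d 2)
      * X 3 ^ (d 3) * X 4 ^ (d 4) * X 5 ^ (d 5) := by
    conv_lhs => rw [hd]
    simp only [X_pow_eq_monomial, C_mul_monomial, monomial_mul, mul_one]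
  rw [this]
  simp only [map_mul, map_pow, Φ_X0, Φ_X1, Φ_X2, Φ_X3, Φ_X4, Φ_X5, algHom_C, algebraMap_eq]

/-- coefficient of a product with `X i` vanishes if target has no `i`. -/
lemma coeff_hX (m : Fin 5 →₀ ℕ) (i : Fin 5) (him : m i = 0) (h : MvPolynomial (Fin 5) ℤ) :
    coeff m (h * X i) = 0 := by
  rw [coeff_mul_X']
  simp [Finsupp.mem_support_iff, him]

/-- every monomial of `Φ A` with zero `x₂` exponent has zero `x₁` exponent -/
lemma A_struct (m : Fin 5 →₀ ℕ) (h2 : m 2 = 0) (h1 : m 1 ≠ 0) (A : MvPolynomial (Fin 6) ℤ) :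
    coeff m (Φ A) = 0 := by
  conv_lhs => rw [A.as_sum]
  rw [map_sum, coeff_sum]
  refine Finset.sum_eq_zero fun d _ => ?_
  rw [Φ_monomial]
  set c := coeff d A with hc
  by_cases hd1 : d 1 = 0
  · by_cases hd2 : d 2 = 0
    · by_cases hd3 : d 3 = 0
      · rw [hd1, hd2, hd3]
        simp only [pow_zero, mul_one]
        simp only [mul_pow, X_pow_eq_monomial, monomial_mul, C_mul_monomial, mul_one, one_mul]
        rw [coeff_monomial]
        rw [if_neg]
        intro h
        apply h1
        have := DFunLike.congr_fun h 1
        simpa [Finsupp.single_apply] using this.symm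
      · obtain ⟨e, he⟩ : ∃ e, _ = e + 1 := ⟨_ - 1, (Nat.succ_pred_eq_of_ne_zero hd3).symm⟩
        rw [show (C c * (X 0*X 3*X 4)^(d 0) * (X 1*X 2*X 4)^(d 1) * (-(X 0+X 1)*X 2*X 3)^(d 2)
              * X 2^(d 3) * X 3^(d 4) * X 4^(d 5) : MvPolynomial (Fin 5) ℤ)
            = (C c * (X 0*X 3*X 4)^(d 0) * (X 1*X 2*X 4)^(d 1) * (-(X 0+X 1)*X 2*X 3)^(d 2)
              * X 2^e * X 3^(d 4) * X 4^(d 5)) * X 2 from by rw [he]; ring]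
        exact coeff_hX m 2 h2 _
    · obtain ⟨e, he⟩ : ∃ e, _ = e + 1 := ⟨_ - 1, (Nat.succ_pred_eq_of_ne_zero hd2).symm⟩
      rw [show (C c * (X 0*X 3*X 4)^(d 0) * (X 1*X 2*X 4)^(d 1) * (-(X 0+X 1)*X 2*X 3)^(d 2)
              * X 2^(d 3) * X 3^(d 4) * X 4^(d 5) : MvPolynomial (Fin 5) ℤ)
            = (C c * (X 0*X 3*X 4)^(d 0) * (X 1*X 2*X 4)^(d 1) * (-(X 0+X 1)*X 2*X 3)^e
              * (-(X 0+X 1)) * X 3 * X 2^(d 3) * X 3^(d 4) * X 4^(d 5)) * X 2 from by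
          rw [he]; ring]
      exact coeff_hX m 2 h2 _
  · obtain ⟨e, he⟩ : ∃ e, _ = e + 1 := ⟨_ - 1, (Nat.succ_pred_eq_of_ne_zero hd1).symm⟩
    rw [show (C c * (X 0*X 3*X 4)^(d 0) * (X 1*X 2*X 4)^(d 1) * (-(X 0+X 1)*X 2*X 3)^(d 2)
            * X 2^(d 3) * X 3^(d 4) * X 4^(d 5) : MvPolynomial (Fin 5) ℤ)
          = (C c * (X 0*X 3*X 4)^(d 0) * (X 1*X 2*X 4)^e * (X 1 * X 4) * (-(X 0+X 1)*X 2*X 3)^(d 2)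
            * X 2^(d 3) * X 3^(d 4) * X 4^(d 5)) * X 2 from by rw [he]; ring]
    exact coeff_hX m 2 h2 _

/-- every monomial of `Φ B` with zero `x₃` exponent has zero `x₀` exponent -/
lemma B_struct (m : Fin 5 →₀ ℕ) (h3 : m 3 = 0) (h0 : m 0 ≠ 0) (B : MvPolynomial (Fin 6) ℤ) :
    coeff m (Φ B) = 0 := by
  conv_lhs => rw [B.as_sum]
  rw [map_sum, coeff_sum]
  refine Finset.sum_eq_zero fun d _ => ?_
  rw [Φ_monomial]
  set c := coeff d B with hc
  by_cases hd0 : d 0 = 0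
  · by_cases hd2 : d 2 = 0
    · by_cases hd4 : d 4 = 0
      · rw [hd0, hd2, hd4]
        simp only [pow_zero, mul_one, one_mul]
        simp only [mul_pow, X_pow_eq_monomial, monomial_mul, C_mul_monomial, mul_one, one_mul]
        rw [coeff_monomial]
        rw [if_neg]
        intro h
        apply h0
        have := DFunLike.congr_fun h 0
        simpa [Finsupp.single_apply] using this.symm
      · obtain ⟨e, he⟩ : ∃ e, _ = e + 1 := ⟨_ - 1, (Nat.succ_pred_eq_of_ne_zero hd4).symm⟩
        rw [show (C c * (X 0*X 3*X 4)^(d 0) * (X 1*X 2*X 4)^(d 1) * (-(X 0+X 1)*X 2*X 3)^(d 2)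
              * X 2^(d 3) * X 3^(d 4) * X 4^(d 5) : MvPolynomial (Fin 5) ℤ)
            = (C c * (X 0*X 3*X 4)^(d 0) * (X 1*X 2*X 4)^(d 1) * (-(X 0+X 1)*X 2*X 3)^(d 2)
              * X 2^(d 3) * X 3^e * X 4^(d 5)) * X 3 from by rw [he]; ring]
        exact coeff_hX m 3 h3 _
    · obtain ⟨e, he⟩ : ∃ e, _ = e + 1 := ⟨_ - 1, (Nat.succ_pred_eq_of_ne_zero hd2).symm⟩
      rw [show (C c * (X 0*X 3*X 4)^(d 0) * (X 1*X 2*X 4)^(d 1) * (-(X 0+X 1)*X 2*X 3)^(d 2)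
              * X 2^(d 3) * X 3^(d 4) * X 4^(d 5) : MvPolynomial (Fin 5) ℤ)
            = (C c * (X 0*X 3*X 4)^(d 0) * (X 1*X 2*X 4)^(d 1) * (-(X 0+X 1)*X 2*X 3)^e
              * (-(X 0+X 1)) * X 2 * X 2^(d 3) * X 3^(d 4) * X 4^(d 5)) * X 3 from by
          rw [he]; ring]
      exact coeff_hX m 3 h3 _
  · obtain ⟨e, he⟩ : ∃ e, _ = e + 1 := ⟨_ - 1, (Nat.succ_pred_eq_of_ne_zero hd0).symm⟩
    rw [show (C c * (X 0*X 3*X 4)^(d 0) * (X 1*X 2*X 4)^(d 1) * (-(X 0+X 1)*X 2*X 3)^(d 2)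
            * X 2^(d 3) * X 3^(d 4) * X 4^(d 5) : MvPolynomial (Fin 5) ℤ)
          = (C c * (X 0*X 3*X 4)^e * (X 0 * X 4) * (X 1*X 2*X 4)^(d 1) * (-(X 0+X 1)*X 2*X 3)^(d 2)
            * X 2^(d 3) * X 3^(d 4) * X 4^(d 5)) * X 3 from by rw [he]; ring]
    exact coeff_hX m 3 h3 _


lemma C_core (b : ℕ) (m : Fin 5 →₀ ℕ) (h0 : m 0 = 1) (h1 : m 1 = b) (c : ℤ) (d2 n3 n4 : ℕ) :
    ((b:ℤ)+1) ∣ coeff m (C c * (-(X 0 + X 1) : MvPolynomial (Fin 5) ℤ)^d2 * (X 2^n3 * X 3^n4)) := by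
  rw [show (-(X 0 + X 1) : MvPolynomial (Fin 5) ℤ) = (-X 0) + (-X 1) from by ring]
  rw [add_pow, Finset.mul_sum, Finset.sum_mul, coeff_sum]
  refine Finset.dvd_sum fun i hi => ?_
  rw [show (C c * ((-X 0:MvPolynomial (Fin 5) ℤ)^i * (-X 1)^(d2-i) * ((d2.choose i : ℕ) : MvPolynomial (Fin 5) ℤ)) * (X 2^n3 * X 3^n4))
      = C (c * (-1)^i * (-1)^(d2-i) * (d2.choose i : ℤ)) * (X 0^i * X 1^(d2-i) * X 2^n3 * X 3^n4) from by
    simp only [map_mul, map_pow, map_neg, map_one, ← C_eq_coe_nat]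
    ring]
  rw [coeff_C_mul]
  simp only [X_pow_eq_monomial, monomial_mul, mul_one]
  rw [coeff_monomial]
  split_ifs with h
  · have e0 := DFunLike.congr_fun h 0
    have e1 := DFunLike.congr_fun h 1
    rw [h0] at e0
    rw [h1] at e1
    simp [Finsupp.single_apply] at e0 e1
    have hile := Finset.mem_range.mp hi
    have hd2 : d2 = b + 1 := by omega
    rw [e0, Nat.choose_one_right, hd2, Nat.add_sub_cancel]
    exact ⟨c * (-1) ^ 1 * (-1) ^ b, by push_cast; ring⟩
  · simp


lemma C_struct (b : ℕ) (m : Fin 5 →₀ ℕ) (h4 : m 4 = 0) (h0 : m 0 = 1) (h1 : m 1 = b)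
    (Cp : MvPolynomial (Fin 6) ℤ) : ((b:ℤ) + 1) ∣ coeff m (Φ Cp) := by
  conv_rhs => rw [Cp.as_sum]
  rw [map_sum, coeff_sum]
  refine Finset.dvd_sum fun d _ => ?_
  rw [Φ_monomial]
  set c := coeff d Cp with hc
  by_cases hd0 : d 0 = 0
  · by_cases hd1 : d 1 = 0
    · by_cases hd5 : d 5 = 0
      · rw [hd0, hd1, hd5]
        simp only [pow_zero, mul_one, one_mul]
        rw [show (C c * (-(X 0+X 1)*X 2*X 3)^(d 2) * X 2^(d 3) * X 3^(d 4) : MvPolynomial (Fin 5) ℤ)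
            = C c * (-(X 0 + X 1))^(d 2) * (X 2^(d 2 + d 3) * X 3^(d 2 + d 4)) from by
          rw [mul_pow, mul_pow]; ring]
        exact C_core b m h0 h1 c _ _ _
      · obtain ⟨e, he⟩ : ∃ e, _ = e + 1 := ⟨_ - 1, (Nat.succ_pred_eq_of_ne_zero hd5).symm⟩
        rw [show (C c * (X 0*X 3*X 4)^(d 0) * (X 1*X 2*X 4)^(d 1) * (-(X 0+X 1)*X 2*X 3)^(d 2)
              * X 2^(d 3) * X 3^(d 4) * X 4^(d 5) : MvPolynomial (Fin 5) ℤ)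
            = (C c * (X 0*X 3*X 4)^(d 0) * (X 1*X 2*X 4)^(d 1) * (-(X 0+X 1)*X 2*X 3)^(d 2)
              * X 2^(d 3) * X 3^(d 4) * X 4^e) * X 4 from by rw [he]; ring]
        rw [coeff_hX m 4 h4 _]
        exact dvd_zero _
    · obtain ⟨e, he⟩ : ∃ e, _ = e + 1 := ⟨_ - 1, (Nat.succ_pred_eq_of_ne_zero hd1).symm⟩
      rw [show (C c * (X 0*X 3*X 4)^(d 0) * (X 1*X 2*X 4)^(d 1) * (-(X 0+X 1)*X 2*X 3)^(d 2)
            * X 2^(d 3) * X 3^(d 4) * X 4^(d 5) : MvPolynomial (Fin 5) ℤ)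
          = (C c * (X 0*X 3*X 4)^(d 0) * (X 1*X 2*X 4)^e * (X 1 * X 2) * (-(X 0+X 1)*X 2*X 3)^(d 2)
            * X 2^(d 3) * X 3^(d 4) * X 4^(d 5)) * X 4 from by rw [he]; ring]
      rw [coeff_hX m 4 h4 _]
      exact dvd_zero _
  · obtain ⟨e, he⟩ : ∃ e, _ = e + 1 := ⟨_ - 1, (Nat.succ_pred_eq_of_ne_zero hd0).symm⟩
    rw [show (C c * (X 0*X 3*X 4)^(d 0) * (X 1*X 2*X 4)^(d 1) * (-(X 0+X 1)*X 2*X 3)^(d 2)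
          * X 2^(d 3) * X 3^(d 4) * X 4^(d 5) : MvPolynomial (Fin 5) ℤ)
        = (C c * (X 0*X 3*X 4)^e * (X 0 * X 3) * (X 1*X 2*X 4)^(d 1) * (-(X 0+X 1)*X 2*X 3)^(d 2)
          * X 2^(d 3) * X 3^(d 4) * X 4^(d 5)) * X 4 from by rw [he]; ring]
    rw [coeff_hX m 4 h4 _]
    exact dvd_zero _


noncomputable def T (b n : ℕ) : Fin 5 →₀ ℕ :=
  Finsupp.single 0 1 + Finsupp.single 1 b + Finsupp.single 2 n +
    Finsupp.single 3 n + Finsupp.single 4 n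

lemma A_part (b n : ℕ) (hb : b ≠ 0) (A : MvPolynomial (Fin 6) ℤ) :
    coeff (T b n) (Φ A * X 2 ^ n) = 0 := by
  have hT : T b n = (Finsupp.single 0 1 + Finsupp.single 1 b + Finsupp.single 3 n
      + Finsupp.single 4 n) + Finsupp.single 2 n := by
    unfold T; abel
  rw [hT, X_pow_eq_monomial, coeff_mul_monomial, mul_one]
  exact A_struct _ (by simp [Finsupp.single_apply]) (by simp [Finsupp.single_apply, hb]) A

lemma B_part (b n : ℕ) (B : MvPolynomial (Fin 6) ℤ) :
    coeff (T b n) (Φ B * X 3 ^ n) = 0 := by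
  have hT : T b n = (Finsupp.single 0 1 + Finsupp.single 1 b + Finsupp.single 2 n
      + Finsupp.single 4 n) + Finsupp.single 3 n := by
    unfold T; abel
  rw [hT, X_pow_eq_monomial, coeff_mul_monomial, mul_one]
  exact B_struct _ (by simp [Finsupp.single_apply]) (by simp [Finsupp.single_apply]) B

lemma C_part (b n : ℕ) (Cp : MvPolynomial (Fin 6) ℤ) :
    ((b:ℤ) + 1) ∣ coeff (T b n) (Φ Cp * X 4 ^ n) := by
  have hT : T b n = (Finsupp.single 0 1 + Finsupp.single 1 b + Finsupp.single 2 n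
      + Finsupp.single 3 n) + Finsupp.single 4 n := by
    unfold T; abel
  rw [hT, X_pow_eq_monomial, coeff_mul_monomial, mul_one]
  exact C_struct b _ (by simp [Finsupp.single_apply]) (by simp [Finsupp.single_apply])
    (by simp [Finsupp.single_apply]) Cp

lemma coeff_T_pure (b n i j : ℕ) :
    coeff (T b n) ((X 0:MvPolynomial (Fin 5) ℤ)^i * X 1^j * (X 2*X 3*X 4)^n)
      = if i = 1 ∧ j = b then 1 else 0 := by
  simp only [mul_pow, X_pow_eq_monomial, monomial_mul, mul_one, one_mul]
  rw [coeff_monomial]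
  by_cases hij : i = 1 ∧ j = b
  · obtain ⟨h1, h2⟩ := hij
    subst h1; subst h2
    rw [if_pos, if_pos ⟨rfl, rfl⟩]
    ext a; fin_cases a <;> simp [T, Finsupp.single_apply]
  · rw [if_neg, if_neg hij]
    intro h
    apply hij
    have e0 := DFunLike.congr_fun h 0
    have e1 := DFunLike.congr_fun h 1
    simp [T, Finsupp.single_apply] at e0 e1
    exact ⟨e0, e1⟩

lemma lhs_third (p k : ℕ) (hp2 : 2 ≤ p) :
    coeff (T (p-1) (p+k)) ((-(X 0+X 1):MvPolynomial (Fin 5) ℤ)^p * (X 2*X 3*X 4)^(p+k))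
      = (-1:ℤ)^p * p := by
  rw [show (-(X 0 + X 1) : MvPolynomial (Fin 5) ℤ) = (-X 0) + (-X 1) from by ring]
  rw [add_pow, Finset.sum_mul, coeff_sum]
  have hstep : ∀ i ∈ Finset.range (p+1),
      coeff (T (p-1) (p+k)) ((-X 0:MvPolynomial (Fin 5) ℤ)^i * (-X 1)^(p-i)
          * ((p.choose i : ℕ) : MvPolynomial (Fin 5) ℤ) * (X 2*X 3*X 4)^(p+k))
        = if i = 1 then (-1:ℤ)^p * p else 0 := by
    intro i _
    rw [show ((-X 0:MvPolynomial (Fin 5) ℤ)^i * (-X 1)^(p-i)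
          * ((p.choose i : ℕ) : MvPolynomial (Fin 5) ℤ) * (X 2*X 3*X 4)^(p+k))
        = C ((-1)^i * (-1)^(p-i) * (p.choose i : ℤ)) * (X 0^i * X 1^(p-i) * (X 2*X 3*X 4)^(p+k))
        from by
      simp only [map_mul, map_pow, map_neg, map_one, ← C_eq_coe_nat]
      ring]
    rw [coeff_C_mul, coeff_T_pure]
    by_cases hi : i = 1
    · subst hi
      rw [if_pos ⟨rfl, rfl⟩, if_pos rfl, Nat.choose_one_right, mul_one]
      rw [show (-1:ℤ)^1 * (-1)^(p-1) = (-1)^p from by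
        rw [← pow_add]; congr 1; omega]
    · rw [if_neg (by tauto), if_neg hi, mul_zero]
  rw [Finset.sum_congr rfl hstep, Finset.sum_ite_eq' (Finset.range (p+1)) 1 (fun _ => (-1:ℤ)^p * p),
    if_pos (Finset.mem_range.mpr (by omega))]

lemma lhs_coeff (p k : ℕ) (hp2 : 2 ≤ p) :
    coeff (T (p-1) (p+k))
      (Φ ((((X 0*X 3)^p + (X 1*X 4)^p + (X 2*X 5)^p) : MvPolynomial (Fin 6) ℤ) * (X 3*X 4*X 5)^k))
      = (-1:ℤ)^p * p := by
  have h1 : Φ ((((X 0*X 3)^p + (X 1*X 4)^p + (X 2*X 5)^p) : MvPolynomial (Fin 6) ℤ) * (X 3*X 4*X 5)^k)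
      = (X 0:MvPolynomial (Fin 5) ℤ)^p * X 1^0 * (X 2*X 3*X 4)^(p+k)
        + X 0^0 * X 1^p * (X 2*X 3*X 4)^(p+k)
        + (-(X 0+X 1))^p * (X 2*X 3*X 4)^(p+k) := by
    simp only [map_add, map_mul, map_pow, Φ_X0, Φ_X1, Φ_X2, Φ_X3, Φ_X4, Φ_X5]
    rw [show ((-(X 0+X 1) * X 2 * X 3 * X 4 : MvPolynomial (Fin 5) ℤ))^p
        = (-(X 0+X 1))^p * X 2^p * X 3^p * X 4^p from by rw [mul_pow, mul_pow, mul_pow]]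
    rw [pow_add]
    ring
  rw [h1, coeff_add, coeff_add, coeff_T_pure, coeff_T_pure, lhs_third p k hp2]
  rw [if_neg (by omega), if_neg (by omega)]
  ring


lemma coeff_natCast_mul (n : ℕ) (f : MvPolynomial (Fin 5) ℤ) (m : Fin 5 →₀ ℕ) :
    coeff m ((n : MvPolynomial (Fin 5) ℤ) * f) = n * coeff m f := by
  rw [← C_eq_coe_nat, coeff_C_mul]

end Stmt2

/-- Let `p` be a prime and `lam ∈ ℤ[u,v,w,x,y,z]` be any polynomial with
`p·lam − ((ux)^p + (vy)^p + (wz)^p) ∈ (ux+vy+wz)`.  Then in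
`R = ℤ[u,v,w,x,y,z]/(ux+vy+wz)`, for every `k ≥ 0`, the image of `lam·(xyz)^k` does not lie
in `(x^(p+k), y^(p+k), z^(p+k))R`.  (Here `u,v,w,x,y,z = X 0,...,X 5`.) -/
theorem stmt2 (p : ℕ) (hp : p.Prime) (lam : MvPolynomial (Fin 6) ℤ)
    (hlam : (p : MvPolynomial (Fin 6) ℤ) * lam -
        ((X 0 * X 3) ^ p + (X 1 * X 4) ^ p + (X 2 * X 5) ^ p) ∈
      Ideal.span {(X 0 * X 3 + X 1 * X 4 + X 2 * X 5 : MvPolynomial (Fin 6) ℤ)}) :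
    ∀ k : ℕ,
      (Ideal.Quotient.mk
          (Ideal.span {(X 0 * X 3 + X 1 * X 4 + X 2 * X 5 : MvPolynomial (Fin 6) ℤ)}))
          (lam * (X 3 * X 4 * X 5) ^ k) ∉
        Ideal.span
          {(Ideal.Quotient.mk _) ((X 3 : MvPolynomial (Fin 6) ℤ) ^ (p + k)),
           (Ideal.Quotient.mk _) ((X 4 : MvPolynomial (Fin 6) ℤ) ^ (p + k)),
           (Ideal.Quotient.mk _) ((X 5 : MvPolynomial (Fin 6) ℤ) ^ (p + k))} := by
  intro k hmem
  rw [Ideal.mem_span_insert] at hmem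
  obtain ⟨a, z, hz, he⟩ := hmem
  rw [Ideal.mem_span_insert] at hz
  obtain ⟨b, z2, hz2, he2⟩ := hz
  rw [Ideal.mem_span_singleton'] at hz2
  obtain ⟨cc, he3⟩ := hz2
  obtain ⟨A, rfl⟩ := Ideal.Quotient.mk_surjective a
  obtain ⟨B, rfl⟩ := Ideal.Quotient.mk_surjective b
  obtain ⟨Cp, rfl⟩ := Ideal.Quotient.mk_surjective cc
  subst he3
  subst he2
  have h0 : (lam * (X 3*X 4*X 5)^k
      - (A * X 3^(p+k) + B * X 4^(p+k) + Cp * X 5^(p+k)) : MvPolynomial (Fin 6) ℤ)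
      ∈ Ideal.span {(X 0 * X 3 + X 1 * X 4 + X 2 * X 5 : MvPolynomial (Fin 6) ℤ)} := by
    rw [← Ideal.Quotient.eq_zero_iff_mem, map_sub, he, map_add, map_add, map_mul, map_mul,
      map_mul]
    ring
  rw [Ideal.mem_span_singleton'] at h0
  obtain ⟨G, hG⟩ := h0
  rw [Ideal.mem_span_singleton'] at hlam
  obtain ⟨H, hH⟩ := hlam
  have Ekey : (((X 0*X 3)^p + (X 1*X 4)^p + (X 2*X 5)^p) : MvPolynomial (Fin 6) ℤ)
        * (X 3*X 4*X 5)^k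
      = (p : MvPolynomial (Fin 6) ℤ) * (A * X 3^(p+k))
        + (p : MvPolynomial (Fin 6) ℤ) * (B * X 4^(p+k))
        + (p : MvPolynomial (Fin 6) ℤ) * (Cp * X 5^(p+k))
        + ((p : MvPolynomial (Fin 6) ℤ) * G - H * (X 3*X 4*X 5)^k)
          * (X 0*X 3 + X 1*X 4 + X 2*X 5) := by
    linear_combination (X 3*X 4*X 5:MvPolynomial (Fin 6) ℤ)^k * hH
      - (p:MvPolynomial (Fin 6) ℤ) * hG
  have happ := congrArg (fun q => coeff (Stmt2.T (p-1) (p+k)) (Stmt2.Φ q)) Ekey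
  rw [Stmt2.lhs_coeff p k hp.two_le] at happ
  have hzero : Stmt2.Φ ((((p:MvPolynomial (Fin 6) ℤ)) * G - H * (X 3*X 4*X 5)^k)
      * (X 0*X 3 + X 1*X 4 + X 2*X 5)) = 0 := by
    rw [map_mul, Stmt2.Φ_s, mul_zero]
  rw [map_add, hzero, add_zero, map_add, map_add, map_mul, map_mul, map_mul,
    map_mul, map_mul, map_mul, map_pow, map_pow, map_pow, map_natCast,
    Stmt2.Φ_X3, Stmt2.Φ_X4, Stmt2.Φ_X5, coeff_add, coeff_add,
    Stmt2.coeff_natCast_mul, Stmt2.coeff_natCast_mul, Stmt2.coeff_natCast_mul,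
    Stmt2.A_part (p-1) (p+k) (by have := hp.two_le; omega) A,
    Stmt2.B_part (p-1) (p+k) B] at happ
  have hdvd := Stmt2.C_part (p-1) (p+k) Cp
  have hcast : (((p-1:ℕ)):ℤ) + 1 = (p:ℤ) := by
    have := hp.one_le
    omega
  rw [hcast] at hdvd
  obtain ⟨t, ht⟩ := hdvd
  rw [ht] at happ
  have hp0 : (p:ℤ) ≠ 0 := by exact_mod_cast hp.ne_zero
  have hkey : ((-1:ℤ))^p = (p:ℤ) * t := by
    have h2 : ((-1:ℤ))^p * p = ((p:ℤ) * t) * p := by linear_combination happ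
    exact mul_right_cancel₀ hp0 h2
  have hdvd1 : (p:ℤ) ∣ 1 := by
    rcases Nat.even_or_odd p with hpar | hpar
    · rw [hpar.neg_one_pow] at hkey
      exact ⟨t, hkey⟩
    · rw [hpar.neg_one_pow] at hkey
      exact ⟨-t, by linarith⟩
  have := Int.le_of_dvd one_pos hdvd1
  have := hp.two_le
  omega
end

section
/- Let p be a prime integer and let λ ∈ ℤ[x,y] be the polynomial λ = (x^p + y^p + (−1)^p (x+y)^p)/p (which has integer coefficients). Then λ does not belong to the ideal (p, x^p, y^p) of ℤ[x,y]. -/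
open MvPolynomial

/-- Let `p` be a prime and `lam ∈ ℤ[x,y]` the polynomial with
`p·lam = x^p + y^p + (−1)^p (x+y)^p`.  Then `lam ∉ (p, x^p, y^p)`.
(Here `x, y = X 0, X 1`.) -/

theorem stmt3 (p : ℕ) (hp : p.Prime) (lam : MvPolynomial (Fin 2) ℤ)
    (hlam : (p : MvPolynomial (Fin 2) ℤ) * lam =
      X 0 ^ p + X 1 ^ p + (-1) ^ p * (X 0 + X 1) ^ p) :
    lam ∉ Ideal.span {(p : MvPolynomial (Fin 2) ℤ),
      (X 0 : MvPolynomial (Fin 2) ℤ) ^ p, (X 1 : MvPolynomial (Fin 2) ℤ) ^ p} := by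
  intro hmem
  have hp2 := hp.two_le
  set m : Fin 2 →₀ ℕ := Finsupp.single 0 1 + Finsupp.single 1 (p - 1) with hmdef
  have hm0 : m 0 = 1 := by simp [hmdef]
  have hm1 : m 1 = p - 1 := by simp [hmdef]
  rw [show ({(p : MvPolynomial (Fin 2) ℤ), X 0 ^ p, X 1 ^ p} : Set (MvPolynomial (Fin 2) ℤ))
      = insert (p : MvPolynomial (Fin 2) ℤ) (insert ((X 0 : MvPolynomial (Fin 2) ℤ) ^ p)
        {(X 1 : MvPolynomial (Fin 2) ℤ) ^ p}) from rfl,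
    Ideal.mem_span_insert] at hmem
  obtain ⟨a, z, hz, rfl⟩ := hmem
  rw [Ideal.mem_span_insert] at hz
  obtain ⟨b, w, hw, rfl⟩ := hz
  rw [Ideal.mem_span_singleton] at hw
  obtain ⟨c, rfl⟩ := hw
  have key : (X 0 : MvPolynomial (Fin 2) ℤ) ^ p + X 1 ^ p + (-1) ^ p * (X 0 + X 1) ^ p
      = (p : MvPolynomial (Fin 2) ℤ) * (a * (p : MvPolynomial (Fin 2) ℤ))
        + (p : MvPolynomial (Fin 2) ℤ) * (b * X 0 ^ p)
        + (p : MvPolynomial (Fin 2) ℤ) * (X 1 ^ p * c) := by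
    rw [← hlam]; ring
  have hcoeffX0 : coeff m ((X 0 : MvPolynomial (Fin 2) ℤ) ^ p) = 0 := by
    rw [coeff_X_pow, if_neg]
    intro h
    have := DFunLike.congr_fun h 1
    simp [hmdef, Finsupp.single_apply] at this
    omega
  have hcoeffX1 : coeff m ((X 1 : MvPolynomial (Fin 2) ℤ) ^ p) = 0 := by
    rw [coeff_X_pow, if_neg]
    intro h
    have := DFunLike.congr_fun h 0
    simp [hmdef, Finsupp.single_apply] at this
  have hnle0 : ¬ Finsupp.single (0 : Fin 2) p ≤ m := by
    intro h
    have := h 0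
    simp [hm0, Finsupp.single_apply] at this
    omega
  have hnle1 : ¬ Finsupp.single (1 : Fin 2) p ≤ m := by
    intro h
    have := h 1
    simp [hm1, Finsupp.single_apply] at this
    omega
  have hb : coeff m (b * (X 0 : MvPolynomial (Fin 2) ℤ) ^ p) = 0 := by
    rw [X_pow_eq_monomial, coeff_mul_monomial', if_neg hnle0]
  have hc : coeff m ((X 1 : MvPolynomial (Fin 2) ℤ) ^ p * c) = 0 := by
    rw [X_pow_eq_monomial, coeff_monomial_mul', if_neg hnle1]
  have hbin : coeff m (((X 0 : MvPolynomial (Fin 2) ℤ) + X 1) ^ p) = (p : ℤ) := by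
    rw [add_pow, coeff_sum]
    rw [Finset.sum_eq_single 1]
    · rw [Nat.choose_one_right, X_pow_eq_monomial, X_pow_eq_monomial, monomial_mul, one_mul,
        ← C_eq_coe_nat, mul_comm _ (C (p : ℤ)), coeff_C_mul, coeff_monomial, if_pos rfl,
        mul_one]
    · intro k hk hk1
      rw [X_pow_eq_monomial, X_pow_eq_monomial, monomial_mul, one_mul, ← C_eq_coe_nat,
        mul_comm, coeff_C_mul, coeff_monomial, if_neg, mul_zero]
      intro h
      have := DFunLike.congr_fun h 0
      simp [hmdef, Finsupp.single_apply] at this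
      exact hk1 this
    · intro h; simp [Finset.mem_range] at h; omega
  have hA : coeff m (a * C (p : ℤ)) = (p : ℤ) * coeff m a := by
    rw [mul_comm, coeff_C_mul]
  have hneg : ((-1 : MvPolynomial (Fin 2) ℤ)) ^ p = C ((-1 : ℤ) ^ p) := by
    rw [map_pow, map_neg, map_one]
  have hthis := congrArg (coeff m) key
  rw [coeff_add, coeff_add, coeff_add, coeff_add, hneg, coeff_C_mul, hbin, hcoeffX0, hcoeffX1,
    ← C_eq_coe_nat p, coeff_C_mul, coeff_C_mul, coeff_C_mul, hA, hb, hc] at hthis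
  have hpne : (p : ℤ) ≠ 0 := by positivity
  have h3 : ((-1 : ℤ)) ^ p = (p : ℤ) * coeff m a := by
    apply mul_right_cancel₀ hpne
    linear_combination hthis
  have hdvd : (p : ℤ) ∣ (-1 : ℤ) ^ p := ⟨coeff m a, h3⟩
  have hunit : IsUnit ((-1 : ℤ) ^ p) := (IsUnit.neg isUnit_one).pow p
  have := isUnit_of_dvd_unit hdvd hunit
  rw [Int.isUnit_iff] at this
  omega
end

section
/- Let R be a polynomial ring in finitely many variables over ℤ, and let f₁, f₂, g₁, g₂ ∈ R satisfy f₁g₁ + f₂g₂ = 0. Let p be a prime integer, e ≥ 1, q = p^e, and let λ ∈ R satisfy p·λ = (f₁g₁)^q + (f₂g₂)^q. Then there exists an integer k ≥ 0 such that λ·(g₁g₂)^k ∈ (g₁^{q+k}, g₂^{q+k})R. -/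
/-- Let `R = ℤ[x₁,…,x_n]` and `f₁,f₂,g₁,g₂ ∈ R` with `f₁g₁+f₂g₂ = 0`.
Let `q = p^e` for a prime `p` and `e ≥ 1`, and let `lam ∈ R` satisfy
`p·lam = (f₁g₁)^q+(f₂g₂)^q`.  Then there is `k ≥ 0` with
`lam·(g₁g₂)^k ∈ (g₁^{q+k}, g₂^{q+k})R`. -/
theorem stmt5 (n : ℕ) (f₁ f₂ g₁ g₂ : MvPolynomial (Fin n) ℤ)
    (hsum : f₁ * g₁ + f₂ * g₂ = 0)
    (p : ℕ) (hp : p.Prime) (e : ℕ) (he : 1 ≤ e) (q : ℕ) (hq : q = p ^ e)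
    (lam : MvPolynomial (Fin n) ℤ)
    (hlam : (p : MvPolynomial (Fin n) ℤ) * lam = (f₁ * g₁) ^ q + (f₂ * g₂) ^ q) :
    ∃ k : ℕ, lam * (g₁ * g₂) ^ k ∈ Ideal.span {g₁ ^ (q + k), g₂ ^ (q + k)} := by
  refine ⟨0, ?_⟩
  simp only [pow_zero, mul_one, Nat.add_zero]
  have hfg : f₁ * g₁ = -(f₂ * g₂) := by linear_combination hsum
  have hpne : (p : MvPolynomial (Fin n) ℤ) ≠ 0 := by
    exact_mod_cast Nat.cast_ne_zero.mpr hp.ne_zero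
  rcases hp.eq_two_or_odd' with h2 | hodd
  · -- p = 2, q even
    have hqeven : Even q := by
      subst hq h2
      exact (Nat.even_pow.mpr ⟨even_two, by omega⟩)
    have : (p : MvPolynomial (Fin n) ℤ) * lam
        = (p : MvPolynomial (Fin n) ℤ) * (f₂ * g₂) ^ q := by
      rw [hlam, hfg, hqeven.neg_pow, h2]
      push_cast
      ring
    have hlam' : lam = (f₂ * g₂) ^ q := mul_left_cancel₀ hpne this
    rw [hlam', mul_pow]
    exact Ideal.mul_mem_left _ _ (Ideal.subset_span (by simp))
  · -- p odd, q odd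
    have hqodd : Odd q := hq ▸ hodd.pow
    have : (p : MvPolynomial (Fin n) ℤ) * lam = (p : MvPolynomial (Fin n) ℤ) * 0 := by
      rw [hlam, hfg, hqodd.neg_pow]; ring
    have hlam' : lam = 0 := mul_left_cancel₀ hpne this
    rw [hlam']
    exact Ideal.zero_mem _
end

section
/- Let R be a polynomial ring in finitely many variables over ℤ, and let f₁,…,f_n, g₁,…,g_n ∈ R satisfy f₁g₁ + ⋯ + f_ng_n = 0, where g₁,…,g_n form a regular sequence in R. Let p be a prime integer, e ≥ 1, q = p^e, and let λ ∈ R satisfy p·λ = (f₁g₁)^q + ⋯ + (f_ng_n)^q. Then there exists an integer k ≥ 0 such that λ·(g₁⋯g_n)^k ∈ (g₁^{q+k}, …, g_n^{q+k})R. -/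
/-!
Because `g` is a regular sequence, the syzygy `f` of `g` is a Koszul syzygy: `f = A g` for an
alternating matrix `A`. Then `(f_i g_i)^q = (∑_j a_ij g_j)^q g_i^q`, which by the Frobenius
congruence is `∑_j (a_ij g_j g_i)^q` plus a multiple of `p g_i^q`. In the double sum the terms for
`(i, j)` and `(j, i)` add up to `(1 + (-1)^q) (a_ij g_j g_i)^q`, and `p ∣ 1 + (-1)^q`. Hence
`p λ ∈ p (g_1^q, …, g_n^q)`, and as `p` is a nonzerodivisor, `λ ∈ (g_1^q, …, g_n^q)`: `k = 0` works.
-/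

open Finset RingTheory.Sequence

section

variable {R : Type*} [CommRing R] {p : ℕ}

lemma Ideal.ofList_ofFn {n : ℕ} (g : Fin n → R) :
    Ideal.ofList (List.ofFn g) = Ideal.span (Set.range g) :=
  congrArg Ideal.span (Set.ext fun _ => List.mem_ofFn)

lemma RingTheory.Sequence.isWeaklyRegular_ofFn_succ_iff {n : ℕ} (g : Fin (n + 1) → R) :
    IsWeaklyRegular R (List.ofFn g) ↔
      IsWeaklyRegular R (List.ofFn fun i : Fin n => g i.castSucc) ∧
        IsSMulRegular (R ⧸ Ideal.span (Set.range fun i : Fin n => g i.castSucc))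
          (g (Fin.last n)) := by
  rw [List.ofFn_succ', List.concat_eq_append, isWeaklyRegular_append_iff,
    isWeaklyRegular_singleton_iff, Ideal.ofList_ofFn, smul_eq_mul, Ideal.mul_top]

theorem exists_skew_of_sum_mul_eq_zero {n : ℕ} {f g : Fin n → R}
    (hreg : IsWeaklyRegular R (List.ofFn g)) (hsum : ∑ i, f i * g i = 0) :
    ∃ a : Fin n → Fin n → R, (∀ i j, a j i = -a i j) ∧ (∀ i, a i i = 0) ∧
      ∀ i, f i = ∑ j, a i j * g j := by
  induction n with
  | zero => exact ⟨fun _ _ => 0, fun i => i.elim0, fun i => i.elim0, fun i => i.elim0⟩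
  | succ n ih =>
    obtain ⟨hreg', hlast_reg⟩ := (isWeaklyRegular_ofFn_succ_iff g).mp hreg
    rw [Fin.sum_univ_castSucc] at hsum
    have hlast : f (Fin.last n) ∈ Ideal.span (Set.range fun i : Fin n => g i.castSucc) := by
      refine mem_of_isSMulRegular_quotient_of_smul_mem hlast_reg ?_
      rw [smul_eq_mul, mul_comm, eq_neg_of_add_eq_zero_right hsum]
      exact neg_mem <| Ideal.sum_mem _ fun i _ =>
        Ideal.mul_mem_left _ _ (Ideal.subset_span ⟨i, rfl⟩)
    obtain ⟨c, hc⟩ := Ideal.mem_span_range_iff_exists_fun.mp hlast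
    -- Subtracting the Koszul relations `c i • (g i • e_last - g_last • e i)` clears the last entry.
    obtain ⟨a, hanti, hdiag, hrep⟩ :=
      ih (f := fun i => f i.castSucc + c i * g (Fin.last n)) hreg' <| calc
        _ = ∑ i : Fin n, f i.castSucc * g i.castSucc + f (Fin.last n) * g (Fin.last n) := by
          simp only [add_mul, sum_add_distrib, ← hc, sum_mul]
          exact congrArg _ (sum_congr rfl fun i _ => by ring)
        _ = 0 := hsum
    refine ⟨fun i j => Fin.lastCases (Fin.lastCases 0 c j)
      (fun i' => Fin.lastCases (-c i') (a i') j) i, fun i j => ?_, fun i => ?_, fun i => ?_⟩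
    · cases i using Fin.lastCases <;> cases j using Fin.lastCases <;>
        simp only [Fin.lastCases_last, Fin.lastCases_castSucc, neg_zero, neg_neg]
      exact hanti _ _
    · cases i using Fin.lastCases <;> simp [hdiag]
    · cases i using Fin.lastCases with
      | last => simp [Fin.sum_univ_castSucc, hc]
      | cast i =>
        simp only [Fin.sum_univ_castSucc, Fin.lastCases_castSucc, Fin.lastCases_last, ← hrep]
        ring

theorem Nat.Prime.dvd_sum_pow_prime_pow_sub_sum_pow (hp : p.Prime) (e : ℕ) {ι : Type*}
    (s : Finset ι) (x : ι → R) :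
    (p : R) ∣ (∑ i ∈ s, x i) ^ p ^ e - ∑ i ∈ s, x i ^ p ^ e := by
  classical
  induction s using Finset.induction_on with
  | empty => simp [zero_pow (pow_ne_zero e hp.ne_zero)]
  | insert a s ha ih =>
    obtain ⟨r, hr⟩ := exists_add_pow_prime_pow_eq hp (x a) (∑ i ∈ s, x i) e
    obtain ⟨c, hc⟩ := ih
    rw [sum_insert ha, sum_insert ha, hr]
    exact ⟨x a * (∑ i ∈ s, x i) * r + c, by linear_combination hc⟩

theorem Nat.Prime.dvd_one_add_neg_one_pow_pow (hp : p.Prime) (e : ℕ) :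
    (p : R) ∣ 1 + (-1) ^ p ^ e := by
  rcases Nat.even_or_odd (p ^ e) with heven | hodd
  · obtain rfl : p = 2 := hp.even_iff.mp (Nat.even_pow.mp heven).1
    rw [heven.neg_one_pow]
    norm_num
  · simp [hodd.neg_one_pow]

theorem Fin.sum_sum_mem_of_add_swap_mem {M σ : Type*} [AddCommMonoid M] [SetLike σ M]
    [AddSubmonoidClass σ M] {S : σ} {n : ℕ} {t : Fin n → Fin n → M}
    (hdiag : ∀ i, t i i ∈ S) (hswap : ∀ i j, i < j → t i j + t j i ∈ S) :
    ∑ i, ∑ j, t i j ∈ S := by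
  induction n with
  | zero => simp [zero_mem]
  | succ n ih =>
    have hsplit : ∑ i, ∑ j, t i j = t 0 0 + ∑ j : Fin n, (t 0 j.succ + t j.succ 0) +
        ∑ i : Fin n, ∑ j : Fin n, t i.succ j.succ := by
      simp only [Fin.sum_univ_succ, sum_add_distrib]
      abel
    rw [hsplit]
    exact add_mem (add_mem (hdiag 0) (sum_mem fun j _ => hswap _ _ j.succ_pos))
      (ih (fun i => hdiag i.succ) fun i j hij => hswap _ _ (Fin.succ_lt_succ_iff.mpr hij))

theorem mem_span_pow_of_prime_mul_eq_sum_pow {n : ℕ} {f g : Fin n → R}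
    (hreg : IsWeaklyRegular R (List.ofFn g)) (hsum : ∑ i, f i * g i = 0)
    (hp : p.Prime) (hpR : IsLeftRegular (p : R)) (e : ℕ) {lam : R}
    (hlam : p * lam = ∑ i, (f i * g i) ^ p ^ e) :
    lam ∈ Ideal.span (Set.range fun i => g i ^ p ^ e) := by
  set I := Ideal.span (Set.range fun i => g i ^ p ^ e)
  obtain ⟨a, hanti, hdiag, hrep⟩ := exists_skew_of_sum_mul_eq_zero hreg hsum
  set t : Fin n → Fin n → R := fun i j => (a i j * g j * g i) ^ p ^ e
  have hgI : ∀ i, g i ^ p ^ e ∈ I := fun i => Ideal.subset_span ⟨i, rfl⟩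
  have ht_mem : ∀ i j, t i j ∈ I := fun i j => by
    simp only [t, mul_pow (a i j * g j)]
    exact I.mul_mem_left _ (hgI i)
  have hrow : ∀ i, (f i * g i) ^ p ^ e - ∑ j, t i j ∈ Ideal.span {(p : R)} * I := fun i => by
    obtain ⟨c, hc⟩ := hp.dvd_sum_pow_prime_pow_sub_sum_pow e univ fun j => a i j * g j
    have hti : ∑ j, t i j = (∑ j, (a i j * g j) ^ p ^ e) * g i ^ p ^ e := by
      rw [sum_mul]
      exact sum_congr rfl fun j _ => mul_pow _ _ _
    refine Ideal.mem_span_singleton_mul.mpr ⟨c * g i ^ p ^ e,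
      I.mul_mem_left _ (hgI i), ?_⟩
    rw [hti, mul_pow, hrep i]
    linear_combination (-g i ^ p ^ e) * hc
  have hpairs : ∑ i, ∑ j, t i j ∈ Ideal.span {(p : R)} * I := by
    refine Fin.sum_sum_mem_of_add_swap_mem (fun i => ?_) fun i j _ => ?_
    · simp [t, hdiag, zero_pow (pow_ne_zero e hp.ne_zero)]
    · obtain ⟨m, hm⟩ := hp.dvd_one_add_neg_one_pow_pow (R := R) e
      refine Ideal.mem_span_singleton_mul.mpr ⟨m * t i j, Ideal.mul_mem_left _ _ (ht_mem i j), ?_⟩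
      have hswap : t j i = (-1) ^ p ^ e * t i j := by
        simp only [t, hanti i j, ← mul_pow]
        ring
      linear_combination (-t i j) * hm - hswap
  have htotal := add_mem (sum_mem fun i (_ : i ∈ univ) => hrow i) hpairs
  rw [sum_sub_distrib, sub_add_cancel] at htotal
  obtain ⟨z, hz, hpz⟩ := Ideal.mem_span_singleton_mul.mp htotal
  rwa [← hpR (hpz.trans hlam.symm)]

end

theorem stmt6_general (N n : ℕ) (f g : Fin n → MvPolynomial (Fin N) ℤ)
    (hreg : RingTheory.Sequence.IsRegular (MvPolynomial (Fin N) ℤ) (List.ofFn g))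
    (hsum : ∑ i, f i * g i = 0)
    (p : ℕ) (hp : p.Prime) (e : ℕ) (q : ℕ) (hq : q = p ^ e)
    (lam : MvPolynomial (Fin N) ℤ)
    (hlam : (p : MvPolynomial (Fin N) ℤ) * lam = ∑ i, (f i * g i) ^ q) :
    ∃ k : ℕ, lam * (∏ i, g i) ^ k ∈
      Ideal.span (Set.range fun i => g i ^ (q + k)) := by
  subst hq
  have hpR : IsLeftRegular (p : MvPolynomial (Fin N) ℤ) :=
    (IsRegular.of_ne_zero (Nat.cast_ne_zero.mpr hp.ne_zero)).left
  refine ⟨0, ?_⟩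
  simpa using mem_span_pow_of_prime_mul_eq_sum_pow hreg.toIsWeaklyRegular hsum hp hpR e hlam

/-- Let `R = ℤ[x₁,…,x_N]` and `f₁,…,f_n, g₁,…,g_n ∈ R` with
`f₁g₁+⋯+f_ng_n = 0`, where `g₁,…,g_n` is a regular sequence.  Let `q = p^e` for a prime `p`
and `e ≥ 1`, and let `lam ∈ R` satisfy `p·lam = Σ (f_ig_i)^q`.  Then there is `k ≥ 0` with
`lam·(g₁⋯g_n)^k ∈ (g₁^{q+k}, …, g_n^{q+k})R`. -/
theorem stmt6 (N n : ℕ) (f g : Fin n → MvPolynomial (Fin N) ℤ)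
    (hreg : RingTheory.Sequence.IsRegular (MvPolynomial (Fin N) ℤ) (List.ofFn g))
    (hsum : ∑ i, f i * g i = 0)
    (p : ℕ) (hp : p.Prime) (e : ℕ) (he : 1 ≤ e) (q : ℕ) (hq : q = p ^ e)
    (lam : MvPolynomial (Fin N) ℤ)
    (hlam : (p : MvPolynomial (Fin N) ℤ) * lam = ∑ i, (f i * g i) ^ q) :
    ∃ k : ℕ, lam * (∏ i, g i) ^ k ∈
      Ideal.span (Set.range fun i => g i ^ (q + k)) :=
  stmt6_general N n f g hreg hsum p hp e q hq lam hlam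
end

section
/- Define polynomials Q_n ∈ K[s,t] by Q₀ = 1, Q₁ = t, and Q_{n+2} = t·Q_{n+1} − s²·Q_n for n ≥ 0, where K is a field. Then there exist infinitely many pairwise non-associated irreducible polynomials in K[s,t], each of which divides Q_n for some n ∈ ℕ; equivalently, the set of irreducible factors (up to units) of the family {Q_n}_{n∈ℕ} is infinite. -/
/-!
Up to the shift `Q n = U (n + 1)`, the `Q n` form the Lucas sequence `U` of the pair
`(a, c) = (t, s²)`, and since no prime divides both `t` and `s²`, `U` is a strong divisibility
sequence on primes: a prime dividing `U m` and `U n` divides `U (gcd m n)`.  Hence the `U p`,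
`p` a prime number, are pairwise relatively prime.  Mapping `s ↦ 0` sends `U p` to `t ^ (p - 1)`,
so each `U p` is a nonzero nonunit, and irreducible factors of the `U p` give infinitely many
pairwise non-associated irreducibles.
-/

open MvPolynomial

section LucasSequence

variable {A : Type*} [CommRing A]

def lucasSeq (a c : A) : ℕ → A
  | 0 => 0
  | 1 => 1
  | n + 2 => a * lucasSeq a c (n + 1) - c * lucasSeq a c n

variable (a c : A)

@[simp] lemma lucasSeq_zero : lucasSeq a c 0 = 0 := rfl

@[simp] lemma lucasSeq_one : lucasSeq a c 1 = 1 := rfl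

lemma lucasSeq_add_two (n : ℕ) :
    lucasSeq a c (n + 2) = a * lucasSeq a c (n + 1) - c * lucasSeq a c n := rfl

lemma eq_lucasSeq_succ {Q : ℕ → A} (h0 : Q 0 = 1) (h1 : Q 1 = a)
    (hrec : ∀ n, Q (n + 2) = a * Q (n + 1) - c * Q n) (n : ℕ) :
    Q n = lucasSeq a c (n + 1) := by
  induction n using Nat.twoStepInduction with
  | zero => exact h0
  | one => simp [h1, lucasSeq_add_two]
  | more n ih ih' => rw [hrec, ih, ih']; rfl

lemma lucasSeq_add (m n : ℕ) :
    lucasSeq a c (m + 1 + n) =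
      lucasSeq a c (m + 1) * lucasSeq a c (n + 1) - c * lucasSeq a c m * lucasSeq a c n := by
  induction m generalizing n with
  | zero => simp [add_comm]
  | succ m ih =>
    rw [show m + 1 + 1 + n = m + 1 + (n + 1) by omega, ih, lucasSeq_add_two, lucasSeq_add_two]
    ring

lemma dvd_lucasSeq_succ_sub_pow (n : ℕ) : c ∣ lucasSeq a c (n + 1) - a ^ n := by
  induction n with
  | zero => simp
  | succ n ih =>
    have h : lucasSeq a c (n + 2) - a ^ (n + 1) =
        a * (lucasSeq a c (n + 1) - a ^ n) - c * lucasSeq a c n := by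
      rw [lucasSeq_add_two]; ring
    rw [h]
    exact dvd_sub (dvd_mul_of_dvd_right ih a) (dvd_mul_right c _)

lemma map_lucasSeq_succ {B : Type*} [CommRing B] (φ : A →+* B) (hc : φ c = 0) (n : ℕ) :
    φ (lucasSeq a c (n + 1)) = φ a ^ n := by
  obtain ⟨d, hd⟩ := dvd_lucasSeq_succ_sub_pow a c n
  rw [← sub_eq_zero, ← map_pow, ← map_sub, hd, map_mul, hc, zero_mul]

variable {a c} (hac : IsRelPrime a c) {p : A} (hp : Prime p)
include hac hp

lemma Prime.not_dvd_of_dvd_lucasSeq_succ {n : ℕ} (hn : p ∣ lucasSeq a c (n + 1)) : ¬p ∣ c := by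
  intro hc
  have hpow : p ∣ a ^ n := by
    simpa using dvd_sub hn (hc.trans (dvd_lucasSeq_succ_sub_pow a c n))
  exact hp.not_isUnit (hac (hp.dvd_of_dvd_pow hpow) hc)

lemma Prime.not_dvd_lucasSeq_and_succ (n : ℕ) :
    ¬(p ∣ lucasSeq a c n ∧ p ∣ lucasSeq a c (n + 1)) := by
  induction n with
  | zero => simpa using hp.not_isUnit ∘ isUnit_of_dvd_one
  | succ n ih =>
    rintro ⟨h₁, h₂⟩
    have h : p ∣ c * lucasSeq a c n := by
      rw [show c * lucasSeq a c n = a * lucasSeq a c (n + 1) - lucasSeq a c (n + 2) by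
        rw [lucasSeq_add_two]; ring]
      exact dvd_sub (dvd_mul_of_dvd_right h₁ a) h₂
    have hc := hp.not_dvd_of_dvd_lucasSeq_succ hac h₁
    exact ih ⟨(hp.dvd_or_dvd h).resolve_left hc, h₁⟩

lemma Prime.dvd_lucasSeq_of_dvd_add {m n : ℕ} (hm : p ∣ lucasSeq a c m)
    (hmn : p ∣ lucasSeq a c (m + n)) : p ∣ lucasSeq a c n := by
  obtain _ | m := m
  · simpa using hmn
  have h : p ∣ c * lucasSeq a c m * lucasSeq a c n := by
    rw [show c * lucasSeq a c m * lucasSeq a c n =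
        lucasSeq a c (m + 1) * lucasSeq a c (n + 1) - lucasSeq a c (m + 1 + n) by
      rw [lucasSeq_add]; ring]
    exact dvd_sub (dvd_mul_of_dvd_left hm _) hmn
  have hc := hp.not_dvd_of_dvd_lucasSeq_succ hac hm
  have hm' : ¬p ∣ lucasSeq a c m := fun h' => hp.not_dvd_lucasSeq_and_succ hac m ⟨h', hm⟩
  exact (hp.dvd_or_dvd h).resolve_left (hp.not_dvd_mul hc hm')

lemma Prime.dvd_lucasSeq_of_dvd_mul_add {m : ℕ} (hm : p ∣ lucasSeq a c m) (k r : ℕ)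
    (h : p ∣ lucasSeq a c (m * k + r)) : p ∣ lucasSeq a c r := by
  induction k with
  | zero => simpa using h
  | succ k ih =>
    rw [mul_add_one, add_comm _ m, add_assoc] at h
    exact ih (hp.dvd_lucasSeq_of_dvd_add hac hm h)

lemma Prime.dvd_lucasSeq_gcd {m n : ℕ} (hm : p ∣ lucasSeq a c m) (hn : p ∣ lucasSeq a c n) :
    p ∣ lucasSeq a c (m.gcd n) := by
  induction m, n using Nat.gcd.induction with
  | H0 n => simpa using hn
  | H1 m n _ ih =>
    rw [Nat.gcd_rec]
    refine ih ?_ hm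
    rw [← Nat.div_add_mod n m] at hn
    exact hp.dvd_lucasSeq_of_dvd_mul_add hac hm _ _ hn

omit hp

lemma isRelPrime_lucasSeq_of_coprime [UniqueFactorizationMonoid A] {m n : ℕ}
    (hmn : m.Coprime n) (hm : lucasSeq a c m ≠ 0) :
    IsRelPrime (lucasSeq a c m) (lucasSeq a c n) :=
  (UniqueFactorizationMonoid.isRelPrime_iff_no_prime_factors hm).2 fun _ hdm hdn hd =>
    hd.not_isUnit (isUnit_of_dvd_one (by simpa [hmn] using hd.dvd_lucasSeq_gcd hac hdm hdn))

end LucasSequence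

theorem exists_infinite_irreducible_dvd_of_pairwise_isRelPrime {α ι : Type*}
    [CommMonoidWithZero α] [WfDvdMonoid α] [Infinite ι] {x : ι → α} (hx0 : ∀ i, x i ≠ 0)
    (hxu : ∀ i, ¬IsUnit (x i)) (hx : Pairwise fun i j => IsRelPrime (x i) (x j)) :
    ∃ T : Set α, T.Infinite ∧ (∀ f ∈ T, Irreducible f ∧ ∃ i, f ∣ x i) ∧
      ∀ f ∈ T, ∀ g ∈ T, f ≠ g → ¬Associated f g := by
  choose F hirr hdvd using fun i => WfDvdMonoid.exists_irreducible_factor (hxu i) (hx0 i)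
  have hF : ∀ i j, Associated (F i) (F j) → i = j := fun i j h => by
    by_contra hij
    exact (hirr i).not_isUnit (hx hij (hdvd i) (h.dvd.trans (hdvd j)))
  refine ⟨Set.range F, Set.infinite_range_of_injective fun i j h => hF i j (h ▸ .refl _), ?_, ?_⟩
  · rintro _ ⟨i, rfl⟩
    exact ⟨hirr i, i, hdvd i⟩
  · rintro _ ⟨i, rfl⟩ _ ⟨j, rfl⟩ hne h
    exact hne (congrArg F (hF i j h))

section TwoVariables

variable {K : Type*} [CommRing K]

lemma isRelPrime_X_one_X_zero_sq [IsDomain K] :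
    IsRelPrime (X 1 : MvPolynomial (Fin 2) K) (X 0 ^ 2) :=
  X_prime.irreducible.isRelPrime_iff_not_dvd.2 fun h => by simpa using X_prime.dvd_of_dvd_pow h

lemma aeval_lucasSeq_X_succ (n : ℕ) :
    aeval ![0, (Polynomial.X : Polynomial K)]
      (lucasSeq (X 1 : MvPolynomial (Fin 2) K) (X 0 ^ 2) (n + 1)) =
      Polynomial.X ^ n := by
  simpa using map_lucasSeq_succ (X 1 : MvPolynomial (Fin 2) K) (X 0 ^ 2)
    (aeval ![0, (Polynomial.X : Polynomial K)]).toRingHom (by simp) n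

end TwoVariables

/-- Let `K` be a field and define `Q_n ∈ K[s,t]` by `Q₀ = 1`, `Q₁ = t`,
`Q_{n+2} = t·Q_{n+1} − s²·Q_n` (with `s, t = X 0, X 1`).  Then there are infinitely many
pairwise non-associated irreducible polynomials in `K[s,t]`, each dividing some `Q_n`. -/
theorem stmt11 (K : Type) [Field K] (Q : ℕ → MvPolynomial (Fin 2) K)
    (hQ0 : Q 0 = 1) (hQ1 : Q 1 = X 1)
    (hQrec : ∀ n : ℕ, Q (n + 2) = X 1 * Q (n + 1) - (X 0) ^ 2 * Q n) :
    ∃ T : Set (MvPolynomial (Fin 2) K), T.Infinite ∧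
      (∀ f ∈ T, Irreducible f ∧ ∃ n : ℕ, f ∣ Q n) ∧
      (∀ f ∈ T, ∀ g ∈ T, f ≠ g → ¬ Associated f g) := by
  have hQ : ∀ n, Q n = lucasSeq (X 1) (X 0 ^ 2) (n + 1) := eq_lucasSeq_succ _ _ hQ0 hQ1 hQrec
  have hQt : ∀ n, aeval ![0, Polynomial.X] (Q n) = Polynomial.X ^ n := fun n => by
    rw [hQ, aeval_lucasSeq_X_succ]
  have hQp : ∀ p : Nat.Primes, Q (p - 1) = lucasSeq (X 1) (X 0 ^ 2) p := fun p => by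
    rw [hQ, Nat.sub_add_cancel p.prop.one_le]
  have hne : ∀ p : Nat.Primes, Q (p - 1) ≠ 0 := fun p h =>
    pow_ne_zero (p - 1) Polynomial.X_ne_zero (by rw [← hQt, h, map_zero])
  have hnu : ∀ p : Nat.Primes, ¬IsUnit (Q (p - 1)) := fun p h =>
    Polynomial.not_isUnit_X <|
      (isUnit_pow_iff (Nat.sub_ne_zero_of_lt p.prop.one_lt)).1 (hQt (p - 1) ▸ h.map _)
  have hrel : Pairwise fun p q : Nat.Primes => IsRelPrime (Q (p - 1)) (Q (q - 1)) :=
    fun p q hpq => by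
      simp only [hQp]
      exact isRelPrime_lucasSeq_of_coprime isRelPrime_X_one_X_zero_sq
        ((Nat.coprime_primes p.prop q.prop).2 (Nat.Primes.coe_nat_injective.ne hpq)) (hQp p ▸ hne p)
  obtain ⟨T, hT, hirr, hna⟩ := exists_infinite_irreducible_dvd_of_pairwise_isRelPrime hne hnu hrel
  exact ⟨T, hT, fun f hf => (hirr f hf).imp_right fun ⟨p, hp⟩ => ⟨_, hp⟩, hna⟩
end
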